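/- For each ε ∈ (0,1), the complex Hessian of u^ε(z₁,z₂) = -2(Re z₂)²/log(|z₁|² + ε) - (|z₁|² + ε)(log(|z₁|² + ε) - 2) is positive semidefinite at every point of 𝔻_{1-ε} × ℂ; in particular u^ε is plurisubharmonic there. -/

import Mathlib

/-!
With `s = ‖z₁‖²`, `x = Re z₂` and `L = log (s + ε)`, one has `u^ε = x² g(s) + h(s)` where
`g(s) = -2 / log (s + ε)` and `h(s) = -(s + ε) (log (s + ε) - 2)`. For any function of this shape,
the chain rule for Wirtinger derivatives through `(‖z₁‖², Re z₂)` gives the complex Hessian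
`[[x² (g' + s g'') + h' + s h'', x g' z̄₁], [x g' z₁, g / 2]]`. On `𝔻_{1-ε} × ℂ` we have `L < 0`,
so the diagonal is nonnegative and the determinant equals
`2 ε x² / ((s + ε)² (-L)³) + (ε / (s + ε) - L) / (-L) ≥ 0`; a Hermitian `2 × 2` matrix with
nonnegative diagonal and determinant is positive semidefinite.
-/

open scoped ComplexOrder

/-- Wirtinger derivative `∂/∂z₁`. -/
noncomputable def wd1 (f : ℂ × ℂ → ℂ) (z : ℂ × ℂ) : ℂ :=
  (fderiv ℝ f z (1, 0) - Complex.I * fderiv ℝ f z (Complex.I, 0)) / 2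

/-- Wirtinger derivative `∂/∂z̄₁`. -/
noncomputable def wd1b (f : ℂ × ℂ → ℂ) (z : ℂ × ℂ) : ℂ :=
  (fderiv ℝ f z (1, 0) + Complex.I * fderiv ℝ f z (Complex.I, 0)) / 2

/-- Wirtinger derivative `∂/∂z₂`. -/
noncomputable def wd2 (f : ℂ × ℂ → ℂ) (z : ℂ × ℂ) : ℂ :=
  (fderiv ℝ f z (0, 1) - Complex.I * fderiv ℝ f z (0, Complex.I)) / 2

/-- Wirtinger derivative `∂/∂z̄₂`. -/
noncomputable def wd2b (f : ℂ × ℂ → ℂ) (z : ℂ × ℂ) : ℂ :=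
  (fderiv ℝ f z (0, 1) + Complex.I * fderiv ℝ f z (0, Complex.I)) / 2

/-- The complex Hessian `(u_{i j̄})` of `f` at `z`. -/
noncomputable def cHess (f : ℂ × ℂ → ℂ) (z : ℂ × ℂ) : Matrix (Fin 2) (Fin 2) ℂ :=
  !![wd1 (wd1b f) z, wd1 (wd2b f) z; wd2 (wd1b f) z, wd2 (wd2b f) z]

/-- `u^ε(z₁,z₂) = -2(Re z₂)²/log(|z₁|²+ε) - (|z₁|²+ε)(log(|z₁|²+ε)-2)` (as a ℂ-valued
function with real values). -/
noncomputable def uE (ε : ℝ) (z : ℂ × ℂ) : ℂ :=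
  ((-2 * (z.2.re) ^ 2 / Real.log (‖z.1‖ ^ 2 + ε)
    - (‖z.1‖ ^ 2 + ε) * (Real.log (‖z.1‖ ^ 2 + ε) - 2) : ℝ) : ℂ)

open Complex ComplexConjugate ContinuousLinearMap Filter Topology

noncomputable def normSqRe (z : ℂ × ℂ) : ℝ × ℝ := (‖z.1‖ ^ 2, z.2.re)

theorem continuous_normSqRe : Continuous normSqRe := by
  unfold normSqRe; fun_prop

theorem hasFDerivAt_normSqRe (z : ℂ × ℂ) :
    HasFDerivAt normSqRe
      (((2 • innerSL ℝ z.1).comp (fst ℝ ℂ ℂ)).prod (reCLM.comp (snd ℝ ℂ ℂ))) z :=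
  (hasFDerivAt_fst.norm_sq).prodMk (reCLM.hasFDerivAt.comp z hasFDerivAt_snd)

theorem ContinuousLinearMap.apply_prod_eq (F' : ℝ × ℝ →L[ℝ] ℝ) (a b : ℝ) :
    F' (a, b) = a * F' (1, 0) + b * F' (0, 1) := by
  rw [← smul_eq_mul, ← smul_eq_mul, ← F'.map_smul, ← F'.map_smul, ← F'.map_add]
  simp

section Wirtinger

variable {f g : ℂ × ℂ → ℂ} {z : ℂ × ℂ}

theorem wd1_congr (h : f =ᶠ[𝓝 z] g) : wd1 f z = wd1 g z := by
  rw [wd1, wd1, h.fderiv_eq]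

theorem wd2_congr (h : f =ᶠ[𝓝 z] g) : wd2 f z = wd2 g z := by
  rw [wd2, wd2, h.fderiv_eq]

theorem wd1_fst_mul (hg : DifferentiableAt ℝ g z) :
    wd1 (fun q => q.1 * g q) z = g z + z.1 * wd1 g z := by
  rw [wd1, wd1, fderiv_fun_mul differentiableAt_fst hg, fderiv_fst]
  simp only [add_apply, smul_apply, coe_fst', smul_eq_mul]
  linear_combination (-g z / 2) * I_sq

theorem wd2_fst_mul (hg : DifferentiableAt ℝ g z) :
    wd2 (fun q => q.1 * g q) z = z.1 * wd2 g z := by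
  rw [wd2, wd2, fderiv_fun_mul differentiableAt_fst hg, fderiv_fst]
  simp only [add_apply, smul_apply, coe_fst', smul_eq_mul]
  ring

theorem wd1_const_mul (hg : DifferentiableAt ℝ g z) (c : ℂ) :
    wd1 (fun q => c * g q) z = c * wd1 g z := by
  rw [wd1, wd1, fderiv_const_mul hg]
  simp only [smul_apply, smul_eq_mul]
  ring

theorem wd2_const_mul (hg : DifferentiableAt ℝ g z) (c : ℂ) :
    wd2 (fun q => c * g q) z = c * wd2 g z := by
  rw [wd2, wd2, fderiv_const_mul hg]
  simp only [smul_apply, smul_eq_mul]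
  ring

variable {F : ℝ × ℝ → ℝ} {F' : ℝ × ℝ →L[ℝ] ℝ}

theorem hasFDerivAt_ofReal_comp_normSqRe (hF : HasFDerivAt F F' (normSqRe z)) :
    HasFDerivAt (fun q => (F (normSqRe q) : ℂ))
      (ofRealCLM.comp (F'.comp (((2 • innerSL ℝ z.1).comp (fst ℝ ℂ ℂ)).prod
        (reCLM.comp (snd ℝ ℂ ℂ))))) z :=
  ofRealCLM.hasFDerivAt.comp z (hF.comp z (hasFDerivAt_normSqRe z))

theorem fderiv_ofReal_comp_normSqRe (hF : HasFDerivAt F F' (normSqRe z)) (w : ℂ × ℂ) :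
    fderiv ℝ (fun q => (F (normSqRe q) : ℂ)) z w =
      ((2 * (z.1.re * w.1.re + z.1.im * w.1.im) * F' (1, 0) + w.2.re * F' (0, 1) : ℝ) : ℂ) := by
  rw [(hasFDerivAt_ofReal_comp_normSqRe hF).fderiv]
  simp only [coe_comp, Function.comp_apply, prod_apply, coe_fst', coe_snd', reCLM_apply,
    ofRealCLM_apply, smul_apply, innerSL_apply_apply, Complex.inner]
  rw [F'.apply_prod_eq, nsmul_eq_mul, mul_re, conj_re, conj_im]
  push_cast
  ring

theorem wd1_comp_normSqRe (hF : HasFDerivAt F F' (normSqRe z)) :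
    wd1 (fun q => (F (normSqRe q) : ℂ)) z = F' (1, 0) * conj z.1 := by
  rw [wd1, fderiv_ofReal_comp_normSqRe hF, fderiv_ofReal_comp_normSqRe hF]
  apply Complex.ext <;> simp <;> ring

theorem wd1b_comp_normSqRe (hF : HasFDerivAt F F' (normSqRe z)) :
    wd1b (fun q => (F (normSqRe q) : ℂ)) z = F' (1, 0) * z.1 := by
  rw [wd1b, fderiv_ofReal_comp_normSqRe hF, fderiv_ofReal_comp_normSqRe hF]
  apply Complex.ext <;> simp <;> ring

theorem wd2_comp_normSqRe (hF : HasFDerivAt F F' (normSqRe z)) :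
    wd2 (fun q => (F (normSqRe q) : ℂ)) z = 2⁻¹ * F' (0, 1) := by
  rw [wd2, fderiv_ofReal_comp_normSqRe hF, fderiv_ofReal_comp_normSqRe hF]
  apply Complex.ext <;> simp [div_eq_inv_mul]

theorem wd2b_comp_normSqRe (hF : HasFDerivAt F F' (normSqRe z)) :
    wd2b (fun q => (F (normSqRe q) : ℂ)) z = 2⁻¹ * F' (0, 1) := by
  rw [wd2b, fderiv_ofReal_comp_normSqRe hF, fderiv_ofReal_comp_normSqRe hF]
  apply Complex.ext <;> simp [div_eq_inv_mul]

end Wirtinger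

theorem cHess_ofReal_comp_normSqRe {F Fs Fx : ℝ × ℝ → ℝ} {Fs' Fx' : ℝ × ℝ →L[ℝ] ℝ} {z : ℂ × ℂ}
    (hF : ∀ᶠ p in 𝓝 (normSqRe z), HasFDerivAt F (Fs p • fst ℝ ℝ ℝ + Fx p • snd ℝ ℝ ℝ) p)
    (hFs : HasFDerivAt Fs Fs' (normSqRe z)) (hFx : HasFDerivAt Fx Fx' (normSqRe z)) :
    cHess (fun q => (F (normSqRe q) : ℂ)) z =
      !![((Fs (normSqRe z) + ‖z.1‖ ^ 2 * Fs' (1, 0) : ℝ) : ℂ), 2⁻¹ * Fx' (1, 0) * conj z.1;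
        2⁻¹ * Fs' (0, 1) * z.1, ((Fx' (0, 1) / 4 : ℝ) : ℂ)] := by
  have hF' := continuous_normSqRe.continuousAt.eventually hF
  have h1b : wd1b (fun q => (F (normSqRe q) : ℂ)) =ᶠ[𝓝 z] fun q => q.1 * (Fs (normSqRe q) : ℂ) :=
    hF'.mono fun q hq => by rw [wd1b_comp_normSqRe hq]; simp [mul_comm]
  have h2b : wd2b (fun q => (F (normSqRe q) : ℂ)) =ᶠ[𝓝 z] fun q => 2⁻¹ * (Fx (normSqRe q) : ℂ) :=
    hF'.mono fun q hq => by rw [wd2b_comp_normSqRe hq]; simp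
  have hdFs := (hasFDerivAt_ofReal_comp_normSqRe hFs).differentiableAt
  have hdFx := (hasFDerivAt_ofReal_comp_normSqRe hFx).differentiableAt
  rw [cHess, wd1_congr h1b, wd2_congr h1b, wd1_congr h2b, wd2_congr h2b, wd1_fst_mul hdFs,
    wd2_fst_mul hdFs, wd1_const_mul hdFx, wd2_const_mul hdFx, wd1_comp_normSqRe hFs,
    wd2_comp_normSqRe hFs, wd1_comp_normSqRe hFx, wd2_comp_normSqRe hFx]
  have hnorm : ((‖z.1‖ ^ 2 : ℝ) : ℂ) = z.1 * conj z.1 := by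
    rw [mul_conj, normSq_eq_norm_sq]
  ext i j
  fin_cases i <;> fin_cases j <;> simp [hnorm] <;> ring

section SquareMulAdd

variable {g h : ℝ → ℝ} {g' h' : ℝ} {p : ℝ × ℝ}

theorem hasFDerivAt_sq_mul_add (hg : HasDerivAt g g' p.1) (hh : HasDerivAt h h' p.1) :
    HasFDerivAt (fun p : ℝ × ℝ => p.2 ^ 2 * g p.1 + h p.1)
      ((p.2 ^ 2 * g' + h') • fst ℝ ℝ ℝ + (2 * p.2 * g p.1) • snd ℝ ℝ ℝ) p := by
  have hfst : HasFDerivAt (Prod.fst : ℝ × ℝ → ℝ) (fst ℝ ℝ ℝ) p := hasFDerivAt_fst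
  have hg₁ := hg.comp_hasFDerivAt p hfst
  have hh₁ := hh.comp_hasFDerivAt p hfst
  refine ((hasFDerivAt_snd.pow 2).mul hg₁ |>.add hh₁).congr_fderiv ?_
  ext <;> simp [mul_comm]

theorem hasFDerivAt_two_mul_mul (hg : HasDerivAt g g' p.1) :
    HasFDerivAt (fun p : ℝ × ℝ => 2 * p.2 * g p.1)
      ((2 * p.2 * g') • fst ℝ ℝ ℝ + (2 * g p.1) • snd ℝ ℝ ℝ) p := by
  refine ((hasFDerivAt_snd.const_mul 2).mul
    (hg.comp_hasFDerivAt p hasFDerivAt_fst)).congr_fderiv ?_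
  ext <;> simp [mul_comm]

end SquareMulAdd

theorem cHess_sq_re_mul_add {g h g' h' : ℝ → ℝ} {g'' h'' : ℝ} {z : ℂ × ℂ}
    (hg : ∀ᶠ s in 𝓝 (‖z.1‖ ^ 2), HasDerivAt g (g' s) s)
    (hh : ∀ᶠ s in 𝓝 (‖z.1‖ ^ 2), HasDerivAt h (h' s) s)
    (hg' : HasDerivAt g' g'' (‖z.1‖ ^ 2)) (hh' : HasDerivAt h' h'' (‖z.1‖ ^ 2)) :
    cHess (fun q => ((q.2.re ^ 2 * g (‖q.1‖ ^ 2) + h (‖q.1‖ ^ 2) : ℝ) : ℂ)) z =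
      !![((z.2.re ^ 2 * (g' (‖z.1‖ ^ 2) + ‖z.1‖ ^ 2 * g'') + (h' (‖z.1‖ ^ 2) + ‖z.1‖ ^ 2 * h'')
          : ℝ) : ℂ), (z.2.re * g' (‖z.1‖ ^ 2) : ℝ) * conj z.1;
        (z.2.re * g' (‖z.1‖ ^ 2) : ℝ) * z.1, ((g (‖z.1‖ ^ 2) / 2 : ℝ) : ℂ)] := by
  have hF : ∀ᶠ p in 𝓝 (normSqRe z), HasFDerivAt (fun p : ℝ × ℝ => p.2 ^ 2 * g p.1 + h p.1)
      ((p.2 ^ 2 * g' p.1 + h' p.1) • fst ℝ ℝ ℝ + (2 * p.2 * g p.1) • snd ℝ ℝ ℝ) p :=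
    (continuousAt_fst.eventually (hg.and hh)).mono fun p hp => hasFDerivAt_sq_mul_add hp.1 hp.2
  refine (cHess_ofReal_comp_normSqRe hF (hasFDerivAt_sq_mul_add hg' hh')
    (hasFDerivAt_two_mul_mul hg.self_of_nhds)).trans ?_
  ext i j
  fin_cases i <;> fin_cases j <;> simp [normSqRe, -mul_eq_mul_right_iff] <;> ring

section LogDerivatives

variable {ε s : ℝ}

theorem hasDerivAt_log_add_const (hs : 0 < s + ε) :
    HasDerivAt (fun s => Real.log (s + ε)) (s + ε)⁻¹ s := by
  simpa using ((hasDerivAt_id s).add_const ε).log hs.ne'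

theorem hasDerivAt_neg_two_div_log (hs : 0 < s + ε) (hL : Real.log (s + ε) ≠ 0) :
    HasDerivAt (fun s => -2 / Real.log (s + ε)) (2 / ((s + ε) * Real.log (s + ε) ^ 2)) s := by
  refine ((hasDerivAt_const s (-2 : ℝ)).fun_div (hasDerivAt_log_add_const hs) hL).congr_deriv ?_
  field_simp
  ring

theorem hasDerivAt_two_div_mul_log_sq (hs : 0 < s + ε) (hL : Real.log (s + ε) ≠ 0) :
    HasDerivAt (fun s => 2 / ((s + ε) * Real.log (s + ε) ^ 2))
      (-2 * (Real.log (s + ε) + 2) / ((s + ε) ^ 2 * Real.log (s + ε) ^ 3)) s := by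
  have hden := ((hasDerivAt_id' s).add_const ε).fun_mul ((hasDerivAt_log_add_const hs).fun_pow 2)
  refine ((hasDerivAt_const s (2 : ℝ)).fun_div hden (by simp [hs.ne', hL])).congr_deriv ?_
  field_simp
  ring

theorem hasDerivAt_neg_mul_log_sub_two (hs : 0 < s + ε) :
    HasDerivAt (fun s => -((s + ε) * (Real.log (s + ε) - 2))) (1 - Real.log (s + ε)) s := by
  refine (((hasDerivAt_id' s).add_const ε).fun_mul
    ((hasDerivAt_log_add_const hs).sub_const 2)).fun_neg.congr_deriv ?_
  field_simp
  ring

theorem hasDerivAt_one_sub_log (hs : 0 < s + ε) :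
    HasDerivAt (fun s => 1 - Real.log (s + ε)) (-1 / (s + ε)) s :=
  ((hasDerivAt_log_add_const hs).const_sub 1).congr_deriv (by ring)

end LogDerivatives

theorem two_mul_mul_le_of_sq_le_mul {a d β x y : ℝ} (ha : 0 ≤ a) (hd : 0 ≤ d)
    (hβ : β ^ 2 ≤ a * d) : 2 * β * x * y ≤ a * x ^ 2 + d * y ^ 2 := by
  rcases ha.eq_or_lt with rfl | ha
  · obtain rfl : β = 0 := pow_eq_zero_iff two_ne_zero |>.mp (by nlinarith [sq_nonneg β])
    nlinarith [mul_nonneg hd (sq_nonneg y)]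
  · have : 0 ≤ a * (a * x ^ 2 + d * y ^ 2 - 2 * β * x * y) := by
      nlinarith [sq_nonneg (a * x - β * y), mul_nonneg (sub_nonneg.2 hβ) (sq_nonneg y)]
    nlinarith [nonneg_of_mul_nonneg_right this ha]

theorem Matrix.posSemidef_fin_two {a d : ℝ} {b : ℂ} (ha : 0 ≤ a) (hd : 0 ≤ d)
    (hb : ‖b‖ ^ 2 ≤ a * d) : (!![(a : ℂ), conj b; b, (d : ℂ)]).PosSemidef := by
  rw [posSemidef_iff_dotProduct_mulVec]
  refine ⟨?_, fun v => ?_⟩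
  · ext i j
    fin_cases i <;> fin_cases j <;> simp
  · have hform : dotProduct (star v) (!![(a : ℂ), conj b; b, (d : ℂ)].mulVec v) =
        ((a * ‖v 0‖ ^ 2 + d * ‖v 1‖ ^ 2 + 2 * (b * v 0 * conj (v 1)).re : ℝ) : ℂ) := by
      apply Complex.ext <;>
        simp [dotProduct, mulVec, Fin.sum_univ_two, Complex.sq_norm, normSq_apply] <;> ring
    have hre : -(2 * ‖b‖ * ‖v 0‖ * ‖v 1‖) ≤ 2 * (b * v 0 * conj (v 1)).re := by
      have := neg_abs_le (b * v 0 * conj (v 1)).re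
      have := abs_re_le_norm (b * v 0 * conj (v 1))
      simp only [norm_mul, norm_conj] at this
      linarith
    have := two_mul_mul_le_of_sq_le_mul (x := ‖v 0‖) (y := ‖v 1‖) ha hd hb
    rw [hform, zero_le_real]
    linarith

section UEHessian

/- `L` stands for `log (‖z.1‖ ^ 2 + ε)`; only its sign matters. -/

variable {ε s x L : ℝ}

theorem uE_hessDiag_nonneg (hs : 0 ≤ s) (hε : 0 < ε) (hL : L < 0) :
    0 ≤ x ^ 2 * (2 / ((s + ε) * L ^ 2) + s * (-2 * (L + 2) / ((s + ε) ^ 2 * L ^ 3)))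
      + (1 - L + s * (-1 / (s + ε))) := by
  obtain ⟨M, hM, rfl⟩ : ∃ M, 0 < M ∧ L = -M := ⟨-L, by linarith, by ring⟩
  have key : x ^ 2 * (2 / ((s + ε) * (-M) ^ 2) + s * (-2 * (-M + 2) / ((s + ε) ^ 2 * (-M) ^ 3)))
      + (1 - -M + s * (-1 / (s + ε))) =
      x ^ 2 * (2 * ε * M + 4 * s) / ((s + ε) ^ 2 * M ^ 3) + (ε / (s + ε) + M) := by
    field_simp
    ring
  rw [key]
  positivity

theorem uE_hessDet_nonneg (hs : 0 ≤ s) (hε : 0 < ε) (hL : L < 0) :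
    (x * (2 / ((s + ε) * L ^ 2))) ^ 2 * s ≤
      (x ^ 2 * (2 / ((s + ε) * L ^ 2) + s * (-2 * (L + 2) / ((s + ε) ^ 2 * L ^ 3)))
        + (1 - L + s * (-1 / (s + ε)))) * (-2 / L / 2) := by
  obtain ⟨M, hM, rfl⟩ : ∃ M, 0 < M ∧ L = -M := ⟨-L, by linarith, by ring⟩
  rw [← sub_nonneg]
  have key : (x ^ 2 * (2 / ((s + ε) * (-M) ^ 2) + s * (-2 * (-M + 2) / ((s + ε) ^ 2 * (-M) ^ 3)))
        + (1 - -M + s * (-1 / (s + ε)))) * (-2 / -M / 2)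
        - (x * (2 / ((s + ε) * (-M) ^ 2))) ^ 2 * s =
      2 * ε * x ^ 2 / ((s + ε) ^ 2 * M ^ 3) + (ε / (s + ε) + M) / M := by
    field_simp
    ring
  rw [key]
  positivity

end UEHessian

theorem uE_eq_sq_re_mul_add (ε : ℝ) :
    uE ε = fun q => ((q.2.re ^ 2 * (-2 / Real.log (‖q.1‖ ^ 2 + ε))
      + -((‖q.1‖ ^ 2 + ε) * (Real.log (‖q.1‖ ^ 2 + ε) - 2)) : ℝ) : ℂ) := by
  funext q
  rw [uE]
  congr 1
  ring

/-- For each `ε ∈ (0,1)`, the complex Hessian of `u^ε` is positive semidefinite at every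
point of `𝔻_{1-ε} × ℂ`; in particular `u^ε` is plurisubharmonic there. -/
theorem cHess_uE_posSemidef (ε : ℝ) (hε : ε ∈ Set.Ioo (0 : ℝ) 1) (z : ℂ × ℂ)
    (hz : ‖z.1‖ < 1 - ε) :
    (cHess (uE ε) z).PosSemidef := by
  have hs : 0 ≤ ‖z.1‖ ^ 2 := by positivity
  have hpos : 0 < ‖z.1‖ ^ 2 + ε := by linarith [hε.1]
  have hlt : ‖z.1‖ ^ 2 + ε < 1 := by nlinarith [norm_nonneg z.1, hε.1]
  have hL := Real.log_neg hpos hlt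
  have hnear : ∀ᶠ s in 𝓝 (‖z.1‖ ^ 2), 0 < s + ε ∧ s + ε < 1 :=
    (continuous_add_const ε).continuousAt.eventually (Ioo_mem_nhds hpos hlt)
  rw [uE_eq_sq_re_mul_add, cHess_sq_re_mul_add
    (hnear.mono fun s hs => hasDerivAt_neg_two_div_log hs.1 (Real.log_neg hs.1 hs.2).ne)
    (hnear.mono fun s hs => hasDerivAt_neg_mul_log_sub_two hs.1)
    (hasDerivAt_two_div_mul_log_sq hpos hL.ne) (hasDerivAt_one_sub_log hpos)]
  have hnorm (c : ℝ) : ‖(c : ℂ) * z.1‖ ^ 2 = c ^ 2 * ‖z.1‖ ^ 2 := by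
    rw [norm_mul, norm_real, Real.norm_eq_abs, mul_pow, sq_abs]
  have hd : 0 ≤ -2 / Real.log (‖z.1‖ ^ 2 + ε) / 2 :=
    div_nonneg (div_nonneg_of_nonpos (by norm_num) hL.le) zero_le_two
  convert Matrix.posSemidef_fin_two (uE_hessDiag_nonneg hs hε.1 hL) hd
    ((hnorm _).trans_le (uE_hessDet_nonneg hs hε.1 hL)) using 3
  rw [map_mul, conj_ofReal]
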